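/- In the Lee algebra V = ℚ[X]/(X² − 1), the Frobenius associativity identity (1 ⊗ m) ∘ (Δ ⊗ 1) = Δ ∘ m holds as maps V ⊗ V → V ⊗ V. -/

import Mathlib

open scoped TensorProduct

/-
The identity says exactly that `Δ` is a map of right `V`-modules, `Δ (u * v) = Δ u * (1 ⊗ v)`.
For the Lee comultiplication this holds because `Δ v = Δ 1 * (1 ⊗ v)`: by linearity it suffices
to check `v = 1`, which is trivial, and `v = X`, where it follows from `X² = 1`.
-/

/-- The Lee algebra `V = ℚ[X]/(X² − 1)`. -/
abbrev LeeAlg : Type := AdjoinRoot ((Polynomial.X : Polynomial ℚ) ^ 2 - 1)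

noncomputable abbrev LeeAlg.x : LeeAlg := AdjoinRoot.root _

open TensorProduct

section Frobenius

variable {R A : Type*} [CommSemiring R] [Semiring A] [Algebra R A]

lemma TensorProduct.map_id_mul'_assoc_tmul (t : A ⊗[R] A) (v : A) :
    map LinearMap.id (LinearMap.mul' R A) (TensorProduct.assoc R A A A (t ⊗ₜ v)) =
      t * (1 ⊗ₜ v) := by
  induction t using TensorProduct.induction_on with
  | zero => simp
  | tmul a b => simp
  | add s t hs ht => simp only [add_tmul, map_add, hs, ht, add_mul]

theorem frobenius_identity_of_apply_eq_mul (Δ : A →ₗ[R] A ⊗[R] A)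
    (hΔ : ∀ v, Δ v = Δ 1 * (1 ⊗ₜ v)) :
    map LinearMap.id (LinearMap.mul' R A) ∘ₗ (TensorProduct.assoc R A A A).toLinearMap ∘ₗ
      map Δ LinearMap.id = Δ ∘ₗ LinearMap.mul' R A := by
  refine TensorProduct.ext' fun u v => ?_
  simp only [LinearMap.comp_apply, LinearEquiv.coe_coe, map_tmul, LinearMap.id_coe, id_eq,
    map_id_mul'_assoc_tmul, LinearMap.mul'_apply]
  rw [hΔ u, hΔ (u * v), mul_assoc, Algebra.TensorProduct.tmul_mul_tmul, one_mul]

end Frobenius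

theorem AdjoinRoot.linearMap_ext_of_natDegree_eq_two {R M : Type*} [CommRing R]
    [AddCommGroup M] [Module R M] {g : Polynomial R} (hg : g.Monic) (hdeg : g.natDegree = 2)
    {f₁ f₂ : AdjoinRoot g →ₗ[R] M} (h₁ : f₁ 1 = f₂ 1) (hroot : f₁ (root g) = f₂ (root g)) :
    f₁ = f₂ := by
  refine (AdjoinRoot.powerBasis' hg).basis.ext fun ⟨i, hi⟩ => ?_
  rw [AdjoinRoot.powerBasis'_dim, hdeg] at hi
  rw [PowerBasis.coe_basis, AdjoinRoot.powerBasis'_gen]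
  interval_cases i
  · simpa using h₁
  · simpa using hroot

lemma LeeAlg.x_mul_x : LeeAlg.x * LeeAlg.x = 1 := by
  have h := AdjoinRoot.eval₂_root ((Polynomial.X : Polynomial ℚ) ^ 2 - 1)
  simpa [sq, sub_eq_zero] using h

lemma LeeAlg.linearMap_ext {M : Type*} [AddCommGroup M] [Module ℚ M] {f₁ f₂ : LeeAlg →ₗ[ℚ] M}
    (h₁ : f₁ 1 = f₂ 1) (hx : f₁ LeeAlg.x = f₂ LeeAlg.x) : f₁ = f₂ := by
  have hC : (Polynomial.X : Polynomial ℚ) ^ 2 - 1 = Polynomial.X ^ 2 - Polynomial.C 1 := by simp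
  refine AdjoinRoot.linearMap_ext_of_natDegree_eq_two ?_ ?_ h₁ hx
  · rw [hC]; exact Polynomial.monic_X_pow_sub_C 1 two_ne_zero
  · rw [hC]; exact Polynomial.natDegree_X_pow_sub_C

lemma LeeAlg.apply_eq_mul_of_apply_one_of_apply_x (Δ : LeeAlg →ₗ[ℚ] LeeAlg ⊗[ℚ] LeeAlg)
    (hΔ1 : Δ 1 = 1 ⊗ₜ LeeAlg.x + LeeAlg.x ⊗ₜ 1)
    (hΔX : Δ LeeAlg.x = LeeAlg.x ⊗ₜ LeeAlg.x + 1 ⊗ₜ 1) (v : LeeAlg) :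
    Δ v = Δ 1 * (1 ⊗ₜ v) := by
  suffices Δ = LinearMap.mulLeft ℚ (Δ 1) ∘ₗ TensorProduct.mk ℚ LeeAlg LeeAlg 1 from
    LinearMap.congr_fun this v
  refine LeeAlg.linearMap_ext ?_ ?_
  · simp [← Algebra.TensorProduct.one_def]
  · simp only [LinearMap.comp_apply, LinearMap.mulLeft_apply, mk_apply, hΔ1, hΔX, add_mul,
      Algebra.TensorProduct.tmul_mul_tmul, one_mul, mul_one, LeeAlg.x_mul_x]
    exact add_comm _ _

/-- Frobenius associativity in the Lee algebra: `(1 ⊗ m) ∘ (Δ ⊗ 1) = Δ ∘ m` as maps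
`V ⊗ V → V ⊗ V`, where `Δ(1) = 1⊗X + X⊗1` and `Δ(X) = X⊗X + 1⊗1`. -/
theorem lee_frobenius_identity
    (Δ : LeeAlg →ₗ[ℚ] LeeAlg ⊗[ℚ] LeeAlg)
    (hΔ1 : Δ 1 = 1 ⊗ₜ[ℚ] LeeAlg.x + LeeAlg.x ⊗ₜ[ℚ] 1)
    (hΔX : Δ LeeAlg.x = LeeAlg.x ⊗ₜ[ℚ] LeeAlg.x + 1 ⊗ₜ[ℚ] 1) :
    (TensorProduct.map LinearMap.id (LinearMap.mul' ℚ LeeAlg)) ∘ₗ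
      (TensorProduct.assoc ℚ LeeAlg LeeAlg LeeAlg).toLinearMap ∘ₗ
      (TensorProduct.map Δ LinearMap.id)
    = Δ ∘ₗ LinearMap.mul' ℚ LeeAlg :=
  frobenius_identity_of_apply_eq_mul Δ (LeeAlg.apply_eq_mul_of_apply_one_of_apply_x Δ hΔ1 hΔX)
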